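/- For every natural number N, every real number k, and every real x with −1 ≤ x ≤ 1, the Fourier–Legendre series of J_N(k·) converges to the function value: ∑_{L=0}^∞ a_{LN}(k) · P_L(x) = J_N(kx), where a_{LN}(k) = ((2L+1)/2) ∫_{−1}^{1} J_N(kt) P_L(t) dt. -/

import Mathlib

/-!
Expand `J_N(k t) = ∑ₘ cₘ t^(2m+N)` and every monomial in Legendre polynomials,
`tⁿ = ∑_{L ≤ n} a_{nL} P_L(t)` with `a_{nL} = (2L+1)/2 ∫ tⁿ P_L`; the latter is the
orthogonality of the `P_L`, which follows from Rodrigues' formula by repeated integration by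
parts. On `[-1, 1]` the crude bounds `|P_L| ≤ 8ᴸ` (read off the coefficients of the shifted
Legendre polynomial) and `|a_{nL}| ≤ (2L+1) 8ᴸ` make the double series
`∑_{m,L} cₘ a_{2m+N,L} P_L(x)` absolutely convergent, since the `cₘ` decay factorially.
Summing it over `L` first gives `J_N(kx)`; summing over `m` first and exchanging sum and
integral gives the Fourier–Legendre series.
-/

open Real

/-- Bessel function of the first kind of integer order `N`, defined by its
everywhere-convergent power series. -/
noncomputable def besselJ (N : ℕ) (x : ℝ) : ℝ :=
  ∑' m : ℕ, (-1 : ℝ) ^ m * (x / 2) ^ (2 * m + N) /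
    ((m.factorial : ℝ) * ((m + N).factorial : ℝ))

/-- Legendre polynomial of degree `L` via Rodrigues' formula. -/
noncomputable def legendreP (L : ℕ) : Polynomial ℝ :=
  Polynomial.C (1 / ((2 : ℝ) ^ L * (L.factorial : ℝ))) *
    (⇑Polynomial.derivative)^[L] ((Polynomial.X ^ 2 - 1) ^ L)

/-- The Fourier–Legendre coefficient `a_{LN}(k)` of `J_N(k·)`. -/
noncomputable def fourierLegendreCoeffJ (L N : ℕ) (k : ℝ) : ℝ :=
  ((2 * (L : ℝ) + 1) / 2) * ∫ t in (-1:ℝ)..1, besselJ N (k * t) * (legendreP L).eval t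

open Polynomial

noncomputable def polyIntegral (a b : ℝ) : ℝ[X] →ₗ[ℝ] ℝ where
  toFun p := ∫ t in a..b, p.eval t
  map_add' p q := by
    simp only [eval_add]
    exact intervalIntegral.integral_add (p.continuous.intervalIntegrable _ _)
      (q.continuous.intervalIntegrable _ _)
  map_smul' c p := by simp [intervalIntegral.integral_const_mul]

theorem polyIntegral_apply (a b : ℝ) (p : ℝ[X]) :
    polyIntegral a b p = ∫ t in a..b, p.eval t := rfl

theorem polyIntegral_derivative (a b : ℝ) (p : ℝ[X]) :
    polyIntegral a b (derivative p) = p.eval b - p.eval a :=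
  intervalIntegral.integral_eq_sub_of_hasDerivAt (fun x _ => p.hasDerivAt x)
    ((derivative p).continuous.intervalIntegrable _ _)

theorem polyIntegral_C_mul (a b c : ℝ) (p : ℝ[X]) :
    polyIntegral a b (C c * p) = c * polyIntegral a b p := by
  rw [← smul_eq_C_mul, map_smul, smul_eq_mul]

theorem polyIntegral_mul_derivative {a b : ℝ} {p q : ℝ[X]} (ha : q.IsRoot a) (hb : q.IsRoot b) :
    polyIntegral a b (p * derivative q) = -polyIntegral a b (derivative p * q) := by
  have h := polyIntegral_derivative a b (p * q)
  rw [derivative_mul, map_add, eval_mul, eval_mul, ha.eq_zero, hb.eq_zero] at h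
  linarith

theorem polyIntegral_mul_iterate_derivative {a b : ℝ} {R : ℝ[X]} {L : ℕ}
    (hR : ∀ j < L, (derivative^[j] R).IsRoot a ∧ (derivative^[j] R).IsRoot b) (Q : ℝ[X]) :
    polyIntegral a b (Q * derivative^[L] R) =
      (-1) ^ L * polyIntegral a b (derivative^[L] Q * R) := by
  induction L generalizing Q with
  | zero => simp
  | succ L ih =>
    obtain ⟨ha, hb⟩ := hR L L.lt_succ_self
    rw [Function.iterate_succ_apply', polyIntegral_mul_derivative ha hb,
      ih (fun j hj => hR j (hj.trans L.lt_succ_self)), ← Function.iterate_succ_apply]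
    ring

theorem iterate_derivative_comp_of_derivative_eq_C {R : Type*} [CommRing R] {q : R[X]} {a : R}
    (hq : derivative q = C a) (p : R[X]) (k : ℕ) :
    derivative^[k] (p.comp q) = C a ^ k * (derivative^[k] p).comp q := by
  induction k generalizing p with
  | zero => simp
  | succ k ih =>
    rw [Function.iterate_succ_apply, derivative_comp, hq, iterate_derivative_C_mul,
      ih, Function.iterate_succ_apply, pow_succ]
    ring

theorem legendreP_eq_shiftedLegendre_comp (L : ℕ) :
    legendreP L = ((shiftedLegendre L).map (Int.castRingHom ℝ)).comp (C (1 / 2) * (1 - X)) := by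
  set q : ℝ[X] := C (1 / 2) * (1 - X)
  set f : ℝ[X] := X ^ L * (1 - X) ^ L
  have hq : derivative q = C (-1 / 2) := by simp [q, neg_div]
  have hkernel : f.comp q = C ((-1 / 4) ^ L) * (X ^ 2 - 1) ^ L := by
    have h2 : (2 : ℝ[X]) * C (1 / 2) = 1 := by rw [← C_ofNat, ← C_mul]; norm_num
    have h4 : C (-1 / 4 : ℝ) = -C (1 / 2) ^ 2 := by rw [← C_pow, ← C_neg]; norm_num
    simp only [f, q, mul_comp, pow_comp, X_comp, sub_comp, one_comp, C_pow, ← mul_pow, h4]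
    congr 1
    linear_combination (-C (1 / 2) * (1 - X)) * h2
  have hrod : (L.factorial : ℝ[X]) * ((shiftedLegendre L).map (Int.castRingHom ℝ)).comp q =
      C ((1 / 2) ^ L) * derivative^[L] ((X ^ 2 - 1) ^ L) := by
    have h := congrArg (fun p => (p.map (Int.castRingHom ℝ)).comp q)
      (factorial_mul_shiftedLegendre_eq L)
    simp only [Polynomial.map_mul, Polynomial.map_natCast, natCast_mul_comp, Polynomial.map_pow,
      Polynomial.map_sub, Polynomial.map_one, map_X, ← iterate_derivative_map] at h
    have hd := iterate_derivative_comp_of_derivative_eq_C hq f L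
    rw [hkernel, iterate_derivative_C_mul] at hd
    rw [h]
    calc (derivative^[L] f).comp q
        = C ((-2) ^ L) * (C (-1 / 2) ^ L * (derivative^[L] f).comp q) := by
          rw [← mul_assoc, ← C_pow, ← C_mul, ← mul_pow]; norm_num
      _ = _ := by rw [← hd, ← mul_assoc, ← C_mul, ← mul_pow]; norm_num
  have hfac : C (1 / (L.factorial : ℝ)) * (L.factorial : ℝ[X]) = 1 := by
    rw [← C_eq_natCast, ← C_mul, one_div_mul_cancel (by positivity), C_1]
  calc legendreP L
      = C (1 / (L.factorial : ℝ)) * (C ((1 / 2) ^ L) * derivative^[L] ((X ^ 2 - 1) ^ L)) := by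
        rw [legendreP, ← mul_assoc, ← C_mul, one_div_pow, div_mul_div_comm, one_mul,
          mul_comm (L.factorial : ℝ)]
    _ = _ := by rw [← hrod, ← mul_assoc, hfac, one_mul]

theorem degree_legendreP (L : ℕ) : (legendreP L).degree = L := by
  have hq : (C (1 / 2) * (1 - X) : ℝ[X]).degree = 1 := by compute_degree!
  rw [legendreP_eq_shiftedLegendre_comp, degree_comp (by rw [hq]; exact zero_lt_one), hq,
    degree_map_eq_of_injective (RingHom.injective_int _), degree_shiftedLegendre, mul_one]

theorem abs_eval_legendreP_le (L : ℕ) {x : ℝ} (hx : |x| ≤ 1) :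
    |(legendreP L).eval x| ≤ 8 ^ L := by
  rw [legendreP_eq_shiftedLegendre_comp, eval_comp, eval_map, eval₂_eq_sum_range,
    natDegree_shiftedLegendre]
  set y := (C (1 / 2) * (1 - X) : ℝ[X]).eval x
  have hy : |y| ≤ 1 := by
    simp only [y, eval_mul, eval_C, eval_sub, eval_one, eval_X]
    rw [abs_le] at hx ⊢
    constructor <;> linarith
  have hterm : ∀ i ∈ Finset.range (L + 1),
      |(Int.castRingHom ℝ) ((shiftedLegendre L).coeff i) * y ^ i| ≤ L.choose i * 4 ^ L := by
    intro i hi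
    have hchoose : ((L + i).choose L : ℝ) ≤ 4 ^ L := by
      have h := (Nat.choose_le_two_pow (L + i) L).trans
        (Nat.pow_le_pow_right two_pos (by rw [Finset.mem_range] at hi; omega : L + i ≤ 2 * L))
      rw [pow_mul] at h
      exact_mod_cast h
    rw [coeff_shiftedLegendre, abs_mul, abs_pow]
    simp only [eq_intCast, Int.cast_mul, Int.cast_pow, Int.cast_neg, Int.cast_one,
      Int.cast_natCast, abs_mul, abs_pow, abs_neg, abs_one, one_pow, one_mul, Nat.abs_cast]
    calc (L.choose i : ℝ) * ((L + i).choose L) * |y| ^ i ≤ L.choose i * 4 ^ L * 1 := by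
          gcongr
          exact pow_le_one₀ (abs_nonneg y) hy
      _ = _ := mul_one _
  calc _ ≤ ∑ i ∈ Finset.range (L + 1), (L.choose i : ℝ) * 4 ^ L :=
        (Finset.abs_sum_le_sum_abs _ _).trans (Finset.sum_le_sum hterm)
    _ = 8 ^ L := by
      rw [← Finset.sum_mul, ← Nat.cast_sum, Nat.sum_range_choose, Nat.cast_pow, ← mul_pow]
      norm_num

theorem isRoot_iterate_derivative_X_sq_sub_one_pow {L j : ℕ} (hj : j < L) :
    (derivative^[j] ((X ^ 2 - 1 : ℝ[X]) ^ L)).IsRoot (-1) ∧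
      (derivative^[j] ((X ^ 2 - 1 : ℝ[X]) ^ L)).IsRoot 1 := by
  have key (a : ℝ) (ha : X - C a ∣ X ^ 2 - 1) :
      (derivative^[j] ((X ^ 2 - 1 : ℝ[X]) ^ L)).IsRoot a :=
    dvd_iff_isRoot.mp <| (dvd_pow_self _ (Nat.sub_ne_zero_of_lt hj)).trans
      (pow_sub_dvd_iterate_derivative_of_pow_dvd j (pow_dvd_pow_of_dvd ha L))
  exact ⟨key (-1) ⟨X - 1, by simp only [map_neg, map_one]; ring⟩,
    key 1 ⟨X + 1, by simp only [map_one]; ring⟩⟩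

theorem polyIntegral_mul_legendreP_eq_zero {Q : ℝ[X]} {L : ℕ} (hQ : Q.natDegree < L) :
    polyIntegral (-1) 1 (Q * legendreP L) = 0 := by
  rw [legendreP, mul_left_comm, polyIntegral_C_mul,
    polyIntegral_mul_iterate_derivative (fun j => isRoot_iterate_derivative_X_sq_sub_one_pow),
    iterate_derivative_eq_zero hQ, zero_mul, map_zero, mul_zero, mul_zero]

theorem polyIntegral_X_sq_sub_one_pow (L : ℕ) :
    polyIntegral (-1) 1 ((X ^ 2 - 1) ^ L) * (2 * L + 1).factorial =
      (-1) ^ L * 2 * (2 ^ L * L.factorial) ^ 2 := by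
  induction L with
  | zero => norm_num [polyIntegral_apply]
  | succ L ih =>
    have hderiv : derivative (X * (X ^ 2 - 1 : ℝ[X]) ^ (L + 1)) =
        C (2 * L + 3 : ℝ) * (X ^ 2 - 1) ^ (L + 1) + C (2 * L + 2 : ℝ) * (X ^ 2 - 1) ^ L := by
      simp only [derivative_mul, derivative_X, derivative_pow, derivative_sub,
        derivative_one, map_add, map_mul, map_ofNat, map_natCast]
      push_cast
      ring
    have hrec := polyIntegral_derivative (-1) 1 (X * (X ^ 2 - 1 : ℝ[X]) ^ (L + 1))
    rw [hderiv, map_add, polyIntegral_C_mul, polyIntegral_C_mul] at hrec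
    norm_num at hrec
    rw [show 2 * (L + 1) + 1 = 2 * L + 1 + 1 + 1 by ring, Nat.factorial_succ (2 * L + 1 + 1),
      Nat.factorial_succ (2 * L + 1), Nat.factorial_succ L]
    push_cast
    linear_combination
      (2 * (L : ℝ) + 2) * (2 * L + 1).factorial * hrec - (2 * (L : ℝ) + 2) ^ 2 * ih

theorem iterate_derivative_X_sq_sub_one_pow_two_mul (L : ℕ) :
    derivative^[2 * L] ((X ^ 2 - 1 : ℝ[X]) ^ L) = C ((2 * L).factorial : ℝ) := by
  have hmonic : ((X ^ 2 - 1 : ℝ[X]) ^ L).Monic := by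
    simpa using (monic_X_pow_sub_C (1 : ℝ) two_ne_zero).pow L
  have hdeg : ((X ^ 2 - 1 : ℝ[X]) ^ L).natDegree = 2 * L := by
    rw [natDegree_pow, ← C_1, natDegree_X_pow_sub_C, mul_comm]
  have hd : (derivative^[2 * L] ((X ^ 2 - 1 : ℝ[X]) ^ L)).natDegree ≤ 0 :=
    (natDegree_iterate_derivative _ _).trans (by omega)
  rw [eq_C_of_natDegree_le_zero hd, coeff_iterate_derivative, zero_add, Nat.descFactorial_self,
    ← hdeg, hmonic.coeff_natDegree, nsmul_one]

theorem polyIntegral_legendreP_mul_self (L : ℕ) :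
    polyIntegral (-1) 1 (legendreP L * legendreP L) = 2 / (2 * L + 1) := by
  set c : ℝ := 1 / (2 ^ L * L.factorial)
  have hd : derivative^[L] (legendreP L) = C (c * (2 * L).factorial) := by
    rw [legendreP, iterate_derivative_C_mul, ← Function.iterate_add_apply, ← two_mul,
      iterate_derivative_X_sq_sub_one_pow_two_mul, ← C_mul]
  have hT := polyIntegral_X_sq_sub_one_pow L
  rw [Nat.factorial_succ] at hT
  push_cast at hT
  have hc : c * (2 ^ L * L.factorial) = 1 := one_div_mul_cancel (by positivity)
  have hsign : ((-1 : ℝ) ^ L) ^ 2 = 1 := by rw [← pow_mul, mul_comm, pow_mul]; norm_num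
  nth_rewrite 2 [legendreP]
  rw [mul_left_comm, polyIntegral_C_mul,
    polyIntegral_mul_iterate_derivative (fun j => isRoot_iterate_derivative_X_sq_sub_one_pow), hd,
    polyIntegral_C_mul, eq_div_iff (by positivity)]
  linear_combination (c ^ 2 * (-1) ^ L) * hT + 2 * (c * (2 ^ L * L.factorial)) ^ 2 * hsign +
    2 * (c * (2 ^ L * L.factorial) + 1) * hc

theorem polyIntegral_legendreP_mul_legendreP {i L : ℕ} (h : i ≠ L) :
    polyIntegral (-1) 1 (legendreP i * legendreP L) = 0 := by
  have hdeg (j : ℕ) : (legendreP j).natDegree = j :=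
    natDegree_eq_of_degree_eq_some (degree_legendreP j)
  rcases h.lt_or_gt with h | h
  · exact polyIntegral_mul_legendreP_eq_zero ((hdeg i).trans_lt h)
  · rw [mul_comm]
    exact polyIntegral_mul_legendreP_eq_zero ((hdeg L).trans_lt h)

noncomputable def legendreSequence : Polynomial.Sequence ℝ := ⟨legendreP, degree_legendreP⟩

theorem sum_smul_legendreP_of_natDegree_le {p : ℝ[X]} {n : ℕ} (hp : p.natDegree ≤ n) :
    ∑ L ∈ Finset.range (n + 1),
      ((2 * L + 1) / 2 * polyIntegral (-1) 1 (p * legendreP L)) • legendreP L = p := by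
  have hspan : p ∈ Submodule.span ℝ (legendreP '' Set.Iic n) := by
    change p ∈ Submodule.span ℝ (legendreSequence '' Set.Iic n)
    rw [legendreSequence.span_degreeLE fun i _ =>
      (leadingCoeff_ne_zero.mpr (legendreSequence.ne_zero i)).isUnit]
    exact mem_degreeLE.mpr (degree_le_of_natDegree_le hp)
  clear hp
  induction hspan using Submodule.span_induction with
  | mem q hq =>
    obtain ⟨i, hi, rfl⟩ := hq
    rw [Finset.sum_eq_single i (fun L _ hL => by
        rw [polyIntegral_legendreP_mul_legendreP (Ne.symm hL), mul_zero, zero_smul])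
      (fun hi' => absurd (Finset.mem_range.mpr (Nat.lt_succ_of_le hi)) hi'),
      polyIntegral_legendreP_mul_self, div_mul_div_cancel₀ two_ne_zero, div_self (by positivity),
      one_smul]
  | zero => simp
  | add p q _ _ hp hq =>
    simp only [add_mul, map_add, mul_add, add_smul, Finset.sum_add_distrib, hp, hq]
  | smul a p _ hp =>
    simp only [smul_mul_assoc, map_smul, smul_eq_mul, mul_left_comm _ a]
    conv_rhs => rw [← hp, Finset.smul_sum]
    simp only [smul_smul]

noncomputable def fourierLegendreCoeff (f : ℝ → ℝ) (L : ℕ) : ℝ :=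
  (2 * L + 1) / 2 * ∫ t in (-1 : ℝ)..1, f t * (legendreP L).eval t

theorem fourierLegendreCoeff_pow (n L : ℕ) :
    fourierLegendreCoeff (· ^ n) L =
      (2 * L + 1) / 2 * polyIntegral (-1) 1 (X ^ n * legendreP L) := by
  simp [fourierLegendreCoeff, polyIntegral_apply]

theorem fourierLegendreCoeff_pow_of_lt {n L : ℕ} (h : n < L) :
    fourierLegendreCoeff (· ^ n) L = 0 := by
  rw [fourierLegendreCoeff_pow, polyIntegral_mul_legendreP_eq_zero (by rwa [natDegree_X_pow]),
    mul_zero]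

theorem hasSum_fourierLegendreCoeff_pow_mul (n : ℕ) (x : ℝ) :
    HasSum (fun L => fourierLegendreCoeff (· ^ n) L * (legendreP L).eval x) (x ^ n) := by
  have hexp := congrArg (eval x)
    (sum_smul_legendreP_of_natDegree_le (natDegree_X_pow_le (R := ℝ) n))
  simp only [eval_finsetSum, eval_smul, smul_eq_mul, ← fourierLegendreCoeff_pow, eval_pow,
    eval_X] at hexp
  rw [← hexp]
  exact hasSum_sum_of_ne_finset_zero fun L hL => by
    rw [fourierLegendreCoeff_pow_of_lt (by simpa using hL), zero_mul]

theorem abs_le_one_of_mem_uIoc {t : ℝ} (ht : t ∈ Set.uIoc (-1 : ℝ) 1) : |t| ≤ 1 := by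
  rw [Set.uIoc_of_le (by norm_num)] at ht
  exact abs_le.mpr ⟨ht.1.le, ht.2⟩

theorem abs_fourierLegendreCoeff_pow_le (n L : ℕ) :
    |fourierLegendreCoeff (· ^ n) L| ≤ (2 * L + 1) * 8 ^ L := by
  have hint : ‖∫ t in (-1 : ℝ)..1, t ^ n * (legendreP L).eval t‖ ≤ 8 ^ L * |1 - (-1)| :=
    intervalIntegral.norm_integral_le_of_norm_le_const fun t ht => by
      have ht := abs_le_one_of_mem_uIoc ht
      rw [Real.norm_eq_abs, abs_mul, abs_pow, ← one_mul ((8 : ℝ) ^ L)]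
      exact mul_le_mul (pow_le_one₀ (abs_nonneg t) ht) (abs_eval_legendreP_le L ht)
        (abs_nonneg _) zero_le_one
  rw [Real.norm_eq_abs] at hint
  norm_num at hint
  rw [fourierLegendreCoeff, abs_mul, abs_of_pos (by positivity)]
  calc _ ≤ ((2 * L + 1) / 2 : ℝ) * (8 ^ L * 2) := by gcongr
    _ = _ := by ring

theorem abs_fourierLegendreCoeff_pow_mul_le (n L : ℕ) {x : ℝ} (hx : |x| ≤ 1) :
    |fourierLegendreCoeff (· ^ n) L * (legendreP L).eval x| ≤ 384 ^ n * (1 / 2) ^ L := by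
  rcases lt_or_ge n L with h | h
  · rw [fourierLegendreCoeff_pow_of_lt h, zero_mul, abs_zero]
    positivity
  have hlin : (2 * L + 1 : ℝ) ≤ 3 ^ L := by
    have := one_add_mul_le_pow (a := (2 : ℝ)) (by norm_num) L
    norm_num at this
    linarith
  calc _ = |fourierLegendreCoeff (· ^ n) L| * |(legendreP L).eval x| := abs_mul _ _
    _ ≤ (2 * L + 1) * 8 ^ L * 8 ^ L :=
      mul_le_mul (abs_fourierLegendreCoeff_pow_le n L) (abs_eval_legendreP_le L hx) (abs_nonneg _)
        (by positivity)
    _ ≤ 3 ^ L * 8 ^ L * 8 ^ L := by gcongr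
    _ = 384 ^ L * (1 / 2) ^ L := by rw [← mul_pow, ← mul_pow, ← mul_pow]; norm_num
    _ ≤ 384 ^ n * (1 / 2) ^ L := by gcongr; norm_num

theorem hasSum_mul_fourierLegendreCoeff_pow {ι : Type*} [Countable ι] {f : ℝ → ℝ}
    {c : ι → ℝ} {e : ι → ℕ}
    (hf : ∀ t ∈ Set.Icc (-1 : ℝ) 1, HasSum (fun i => c i * t ^ e i) (f t))
    (hc : Summable fun i => |c i|) (L : ℕ) :
    HasSum (fun i => c i * fourierLegendreCoeff (· ^ e i) L) (fourierLegendreCoeff f L) := by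
  have hint := intervalIntegral.hasSum_integral_of_dominated_convergence
    (F := fun i t => c i * t ^ e i * (legendreP L).eval t)
    (f := fun t => f t * (legendreP L).eval t)
    (μ := MeasureTheory.volume) (a := -1) (b := 1) (fun i _ => |c i| * 8 ^ L)
    (fun i => (by fun_prop : Continuous _).aestronglyMeasurable)
    (fun i => Filter.Eventually.of_forall fun t ht => by
      have ht := abs_le_one_of_mem_uIoc ht
      rw [Real.norm_eq_abs, abs_mul, abs_mul, abs_pow]
      exact mul_le_mul (mul_le_of_le_one_right (abs_nonneg _) (pow_le_one₀ (abs_nonneg t) ht))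
        (abs_eval_legendreP_le L ht) (abs_nonneg _) (abs_nonneg _))
    (Filter.Eventually.of_forall fun _ _ => hc.mul_right _)
    intervalIntegrable_const
    (Filter.Eventually.of_forall fun t ht => by
      rw [Set.uIoc_of_le (by norm_num)] at ht
      exact (hf t (Set.Ioc_subset_Icc_self ht)).mul_right _)
  have hterm (i : ι) : c i * fourierLegendreCoeff (· ^ e i) L =
      (2 * L + 1) / 2 * ∫ t in (-1 : ℝ)..1, c i * t ^ e i * (legendreP L).eval t := by
    simp only [fourierLegendreCoeff, mul_assoc, intervalIntegral.integral_const_mul]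
    ring
  simp only [hterm]
  exact hint.mul_left _

/-- The constant `384` comes from the bound `|a_{nL} P_L(x)| ≤ 384ⁿ 2⁻ᴸ` of
`abs_fourierLegendreCoeff_pow_mul_le`. -/
theorem hasSum_fourierLegendreCoeff_mul_legendreP {ι : Type*} [Countable ι] {f : ℝ → ℝ}
    {c : ι → ℝ} {e : ι → ℕ}
    (hf : ∀ t ∈ Set.Icc (-1 : ℝ) 1, HasSum (fun i => c i * t ^ e i) (f t))
    (hc : Summable fun i => |c i| * 384 ^ e i) {x : ℝ} (hx : x ∈ Set.Icc (-1 : ℝ) 1) :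
    HasSum (fun L => fourierLegendreCoeff f L * (legendreP L).eval x) (f x) := by
  set G : ℕ × ι → ℝ :=
    fun p => c p.2 * fourierLegendreCoeff (· ^ e p.2) p.1 * (legendreP p.1).eval x
  have habs : Summable fun i => |c i| := hc.of_nonneg_of_le (fun i => abs_nonneg _)
    fun i => le_mul_of_one_le_right (abs_nonneg _) (one_le_pow₀ (by norm_num))
  have hG : Summable G := by
    refine (summable_geometric_two.mul_of_nonneg hc (fun L => by positivity)
      (fun i => by positivity)).of_norm_bounded fun p => ?_
    calc ‖G p‖
        = |c p.2| * |fourierLegendreCoeff (· ^ e p.2) p.1 * (legendreP p.1).eval x| := by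
          simp only [G, Real.norm_eq_abs, mul_assoc, abs_mul]
      _ ≤ |c p.2| * (384 ^ e p.2 * (1 / 2) ^ p.1) := by
          gcongr; exact abs_fourierLegendreCoeff_pow_mul_le _ _ (abs_le.mpr hx)
      _ = _ := by ring
  have hrows (i : ι) : HasSum (fun L => G (L, i)) (c i * x ^ e i) := by
    simpa only [G, mul_assoc] using (hasSum_fourierLegendreCoeff_pow_mul (e i) x).mul_left (c i)
  have htotal : HasSum G (f x) := by
    rw [(hf x hx).unique (hG.prod_symm.hasSum.prod_fiberwise hrows)]
    exact (Equiv.prodComm ι ℕ).tsum_eq G ▸ hG.hasSum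
  exact htotal.prod_fiberwise fun L => (hasSum_mul_fourierLegendreCoeff_pow hf habs L).mul_right _

noncomputable def besselJCoeff (N m : ℕ) : ℝ :=
  (-1) ^ m / (2 ^ (2 * m + N) * m.factorial * (m + N).factorial)

theorem summable_abs_besselJCoeff_mul_pow (N : ℕ) (y : ℝ) :
    Summable fun m => |besselJCoeff N m * y ^ (2 * m + N)| := by
  refine ((Real.summable_pow_div_factorial ((|y| / 2) ^ 2)).mul_left ((|y| / 2) ^ N))
    |>.of_nonneg_of_le (fun m => abs_nonneg _) fun m => ?_
  have hfac : (1 : ℝ) ≤ (m + N).factorial := by exact_mod_cast (m + N).factorial_pos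
  rw [besselJCoeff, abs_mul, abs_div, abs_pow, abs_neg, abs_one, one_pow,
    abs_of_pos (by positivity), abs_pow, ← pow_mul, ← mul_div_assoc, ← pow_add, add_comm N,
    div_pow, div_mul_eq_mul_div, mul_comm, div_div, mul_one]
  exact div_le_div_of_nonneg_left (by positivity) (by positivity)
    (le_mul_of_one_le_right (by positivity) hfac)

theorem hasSum_besselJ (N : ℕ) (y : ℝ) :
    HasSum (fun m => besselJCoeff N m * y ^ (2 * m + N)) (besselJ N y) := by
  have hterm (m : ℕ) : (-1) ^ m * (y / 2) ^ (2 * m + N) / (m.factorial * (m + N).factorial) =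
      besselJCoeff N m * y ^ (2 * m + N) := by
    rw [besselJCoeff, div_pow]
    ring
  simp only [besselJ, hterm]
  exact (summable_abs_iff.mp (summable_abs_besselJCoeff_mul_pow N y)).hasSum

/-- The Fourier–Legendre series of `J_N(k·)` converges pointwise on `[-1, 1]`
to the function value: `∑_{L=0}^∞ a_{LN}(k) P_L(x) = J_N(kx)`. -/
theorem fourierLegendre_series_besselJ (N : ℕ) (k x : ℝ)
    (hx₁ : -1 ≤ x) (hx₂ : x ≤ 1) :
    HasSum (fun L : ℕ => fourierLegendreCoeffJ L N k * (legendreP L).eval x)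
      (besselJ N (k * x)) := by
  refine hasSum_fourierLegendreCoeff_mul_legendreP (f := fun t => besselJ N (k * t))
    (c := fun m => besselJCoeff N m * k ^ (2 * m + N)) (e := fun m => 2 * m + N)
    (fun t _ => ?_) ?_ ⟨hx₁, hx₂⟩
  · simpa only [mul_assoc, mul_pow] using hasSum_besselJ N (k * t)
  · simpa only [abs_mul, abs_pow, mul_pow, mul_assoc, abs_of_pos (by norm_num : (0 : ℝ) < 384),
      mul_comm (384 : ℝ) k] using summable_abs_besselJCoeff_mul_pow N (384 * k)
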